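/- arXiv:2202.00325 — 6 statements merged into one kernel-verified Lean document; each statement's English description precedes it below -/
import Mathlib

section
/- Let G be a connected simple graph on N ≥ 2 vertices with degree vector d, and let x be an entrywise-positive eigenvector of the adjacency matrix of G with principal ratio γ = (max_v x_v)/(min_v x_v). Then c(d) ≤ γ² − 1. -/
open scoped Classical
open Matrix

/-!
Write `m` and `M` for the least and the greatest entry of `x`. The eigenvalue equation
`λ x_v = ∑_{u ∼ v} x_u` gives `d_v m ≤ λ x_v ≤ d_v M` at every vertex, so `λ ≥ 0` and
`d_v m² ≤ λ m M ≤ d_w M²` for any two vertices `v`, `w`: all degrees lie within a factor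
`γ² = (M / m)²` of each other. For a nonnegative vector `d` with `d_v ≤ K d_w` for all `v`, `w`,
summing over `w` and then against `d_v` gives `N ∑ d_v² ≤ K (∑ d_v)²`, which is `c(d) ≤ K - 1`.
-/

/-- The square of the coefficient of variation of a vector: `(σ/μ)²` where
`μ` is the mean and `σ²` the (population) variance of the entries. -/
noncomputable def cv2 {ι : Type*} [Fintype ι] (x : ι → ℝ) : ℝ :=
  ((∑ i, (x i - (∑ j, x j) / (Fintype.card ι : ℝ)) ^ 2) / (Fintype.card ι : ℝ)) /
    ((∑ j, x j) / (Fintype.card ι : ℝ)) ^ 2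

open Finset

lemma cv2_eq_of_sum_ne_zero {ι : Type*} [Fintype ι] (d : ι → ℝ) (hd : ∑ i, d i ≠ 0) :
    cv2 d = Fintype.card ι * (∑ i, d i ^ 2) / (∑ i, d i) ^ 2 - 1 := by
  obtain ⟨i, -, -⟩ := exists_ne_zero_of_sum_ne_zero hd
  have : Nonempty ι := ⟨i⟩
  have hN : (Fintype.card ι : ℝ) ≠ 0 := by exact_mod_cast Fintype.card_ne_zero
  have hvar : ∑ i, (d i - (∑ j, d j) / Fintype.card ι) ^ 2
      = ∑ i, d i ^ 2 - (∑ i, d i) ^ 2 / Fintype.card ι := by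
    simp only [sub_sq, sum_add_distrib, sum_sub_distrib, ← sum_mul, ← mul_sum, sum_const,
      card_univ, nsmul_eq_mul]
    field_simp
    ring
  rw [cv2, hvar]
  field_simp

lemma cv2_le_of_le_mul {ι : Type*} [Fintype ι] {d : ι → ℝ} {K : ℝ} (hd : ∀ i, 0 ≤ d i)
    (hK : 1 ≤ K) (hdK : ∀ i j, d i ≤ K * d j) : cv2 d ≤ K - 1 := by
  rcases eq_or_ne (∑ i, d i) 0 with hS | hS
  · simpa [cv2, hS] using hK
  have hS_pos : 0 < ∑ i, d i := (sum_nonneg fun i _ => hd i).lt_of_ne hS.symm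
  have hcard_mul : ∀ i, Fintype.card ι * d i ≤ K * ∑ j, d j := fun i => by
    simpa [mul_sum] using sum_le_sum fun j (_ : j ∈ univ) => hdK i j
  rw [cv2_eq_of_sum_ne_zero d hS, sub_le_sub_iff_right, div_le_iff₀ (by positivity)]
  calc (Fintype.card ι : ℝ) * ∑ i, d i ^ 2 = ∑ i, d i * (Fintype.card ι * d i) := by
        rw [mul_sum]; exact sum_congr rfl fun i _ => by ring
    _ ≤ ∑ i, d i * (K * ∑ j, d j) :=
        sum_le_sum fun i _ => mul_le_mul_of_nonneg_left (hcard_mul i) (hd i)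
    _ = K * (∑ i, d i) ^ 2 := by rw [← sum_mul]; ring

namespace SimpleGraph

variable {V : Type*} [Fintype V] (G : SimpleGraph V) {x : V → ℝ} {lam : ℝ}

lemma eigenvalue_mul_eq_sum_neighborFinset (heig : G.adjMatrix ℝ *ᵥ x = lam • x) (v : V) :
    lam * x v = ∑ u ∈ G.neighborFinset v, x u := by
  simpa [adjMatrix_mulVec_apply] using (congrFun heig v).symm

lemma degree_mul_le_eigenvalue_mul (heig : G.adjMatrix ℝ *ᵥ x = lam • x) {m : ℝ}
    (hm : ∀ u, m ≤ x u) (v : V) : G.degree v * m ≤ lam * x v := by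
  rw [G.eigenvalue_mul_eq_sum_neighborFinset heig v, ← card_neighborFinset_eq_degree,
    ← nsmul_eq_mul]
  exact card_nsmul_le_sum _ _ _ fun u _ => hm u

lemma eigenvalue_mul_le_degree_mul (heig : G.adjMatrix ℝ *ᵥ x = lam • x) {M : ℝ}
    (hM : ∀ u, x u ≤ M) (v : V) : lam * x v ≤ G.degree v * M := by
  rw [G.eigenvalue_mul_eq_sum_neighborFinset heig v, ← card_neighborFinset_eq_degree,
    ← nsmul_eq_mul]
  exact sum_le_card_nsmul _ _ _ fun u _ => hM u

lemma eigenvalue_nonneg (heig : G.adjMatrix ℝ *ᵥ x = lam • x) (hx : ∀ v, 0 < x v) (v : V) :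
    0 ≤ lam := by
  have h := G.degree_mul_le_eigenvalue_mul heig (fun u => (hx u).le) v
  rw [mul_zero] at h
  exact nonneg_of_mul_nonneg_left h (hx v)

lemma degree_mul_sq_le_degree_mul_sq (heig : G.adjMatrix ℝ *ᵥ x = lam • x)
    (hx : ∀ v, 0 < x v) {m M : ℝ} (hm0 : 0 ≤ m) (hm : ∀ u, m ≤ x u) (hM : ∀ u, x u ≤ M)
    (v w : V) : G.degree v * m ^ 2 ≤ G.degree w * M ^ 2 := by
  have hlam := G.eigenvalue_nonneg heig hx v
  have hM0 : 0 ≤ M := hm0.trans ((hm v).trans (hM v))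
  calc G.degree v * m ^ 2 = (G.degree v * m) * m := by ring
    _ ≤ (lam * M) * m := mul_le_mul_of_nonneg_right
        ((G.degree_mul_le_eigenvalue_mul heig hm v).trans
          (mul_le_mul_of_nonneg_left (hM v) hlam)) hm0
    _ = (lam * m) * M := by ring
    _ ≤ (G.degree w * M) * M := mul_le_mul_of_nonneg_right
        ((mul_le_mul_of_nonneg_left (hm w) hlam).trans
          (G.eigenvalue_mul_le_degree_mul heig hM w)) hM0
    _ = G.degree w * M ^ 2 := by ring

end SimpleGraph

theorem stmt2_general {V : Type*} [Fintype V] (G : SimpleGraph V) (hG : G.Connected)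
    (x : V → ℝ) (hx : ∀ v, 0 < x v) (lam : ℝ)
    (heig : G.adjMatrix ℝ *ᵥ x = lam • x) :
    cv2 (fun v => (G.degree v : ℝ)) ≤ ((⨆ v, x v) / (⨅ v, x v)) ^ 2 - 1 := by
  have := hG.nonempty
  obtain ⟨a, ha⟩ := exists_eq_ciInf_of_finite (f := x)
  obtain ⟨b, hb⟩ := exists_eq_ciSup_of_finite (f := x)
  have hm : ∀ v, x a ≤ x v := fun v => ha ▸ ciInf_le (Finite.bddBelow_range x) v
  have hM : ∀ v, x v ≤ x b := fun v => hb ▸ le_ciSup (Finite.bddAbove_range x) v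
  have ha0 := hx a
  rw [← ha, ← hb]
  refine cv2_le_of_le_mul (fun v => Nat.cast_nonneg _) ?_ fun v w => ?_
  · exact one_le_pow₀ ((one_le_div ha0).mpr (hm b))
  · rw [div_pow, div_mul_eq_mul_div, le_div_iff₀ (by positivity), mul_comm _ (G.degree w : ℝ)]
    exact G.degree_mul_sq_le_degree_mul_sq heig hx ha0.le hm hM v w

/-- For a connected graph `G` on at least two vertices with an entrywise-positive
adjacency eigenvector `x` and principal ratio `γ = (max x) / (min x)`,
the degree vector `d` satisfies `c(d) ≤ γ² − 1`. -/
theorem stmt2 {V : Type*} [Fintype V] (G : SimpleGraph V) (hG : G.Connected)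
    (hcard : 2 ≤ Fintype.card V)
    (x : V → ℝ) (hx : ∀ v, 0 < x v) (lam : ℝ)
    (heig : G.adjMatrix ℝ *ᵥ x = lam • x) :
    cv2 (fun v => (G.degree v : ℝ)) ≤ ((⨆ v, x v) / (⨅ v, x v)) ^ 2 - 1 :=
  stmt2_general G hG x hx lam heig
end

section
/- Let G be a connected simple graph on N vertices and let x be an entrywise-positive eigenvector of the adjacency matrix of G with eigenvalue λ and with ‖x‖₂² = ∑_v x_v² = 1. Then c(x) ≤ N/(λ+1) − 1. -/
open scoped Classical
open Matrix

/-
Write `S = ∑ x_v` and `N` for the number of vertices; for `‖x‖₂ = 1` one has `c(x) = N / S² − 1`.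
Adding `x_u` to the eigenvalue equation `∑_{v ∼ u} x_v = λ x_u` gives `(λ + 1) x_u ≤ S`, since a
vertex is not its own neighbour. Multiplying by `x_u` and summing over `u` yields `λ + 1 ≤ S²`,
while `λ ≥ 0` because `x > 0`.
-/

open Finset

lemma sum_sub_mean_sq {ι : Type*} [Fintype ι] (x : ι → ℝ) :
    ∑ i, (x i - (∑ j, x j) / (Fintype.card ι : ℝ)) ^ 2 =
      ∑ i, x i ^ 2 - (∑ i, x i) ^ 2 / (Fintype.card ι : ℝ) := by
  set S := ∑ j, x j
  set N : ℝ := (Fintype.card ι : ℝ)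
  have hexpand : ∀ i, (x i - S / N) ^ 2 = x i ^ 2 - 2 * (S / N) * x i + (S / N) ^ 2 :=
    fun i => by ring
  simp only [hexpand, sum_add_distrib, sum_sub_distrib, ← mul_sum, sum_const, card_univ,
    nsmul_eq_mul]
  rcases eq_or_ne N 0 with hN | hN
  · simp [hN]
  · field_simp
    ring

lemma cv2_eq_card_mul_sum_sq_div_sq_sub_one {ι : Type*} [Fintype ι] (x : ι → ℝ)
    (hS : ∑ i, x i ≠ 0) :
    cv2 x = Fintype.card ι * (∑ i, x i ^ 2) / (∑ i, x i) ^ 2 - 1 := by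
  have hN : (Fintype.card ι : ℝ) ≠ 0 := by
    have : Nonempty ι := (nonempty_of_sum_ne_zero hS).to_type
    positivity
  rw [cv2, sum_sub_mean_sq]
  field_simp

namespace SimpleGraph

variable {V : Type*} [Fintype V] {G : SimpleGraph V} [DecidableRel G.Adj] {x : V → ℝ} {lam : ℝ}

lemma sum_neighborFinset_eq_of_adjMatrix_mulVec_eq (heig : G.adjMatrix ℝ *ᵥ x = lam • x)
    (u : V) : ∑ v ∈ G.neighborFinset u, x v = lam * x u := by
  simpa [adjMatrix_mulVec_apply] using congrFun heig u

lemma nonneg_of_adjMatrix_mulVec_eq (heig : G.adjMatrix ℝ *ᵥ x = lam • x) (hx : 0 ≤ x)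
    {u : V} (hu : 0 < x u) : 0 ≤ lam := by
  have hsum : 0 ≤ lam * x u :=
    sum_neighborFinset_eq_of_adjMatrix_mulVec_eq heig u ▸ sum_nonneg fun v _ => hx v
  exact nonneg_of_mul_nonneg_left hsum hu

lemma add_one_mul_le_sum_of_adjMatrix_mulVec_eq (heig : G.adjMatrix ℝ *ᵥ x = lam • x)
    (hx : 0 ≤ x) (u : V) : (lam + 1) * x u ≤ ∑ v, x v := by
  have hu : u ∉ G.neighborFinset u := by simp
  calc (lam + 1) * x u = ∑ v ∈ insert u (G.neighborFinset u), x v := by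
        rw [sum_insert hu, sum_neighborFinset_eq_of_adjMatrix_mulVec_eq heig u]; ring
    _ ≤ ∑ v, x v := sum_le_univ_sum_of_nonneg hx

lemma add_one_mul_sum_sq_le_sq_sum_of_adjMatrix_mulVec_eq
    (heig : G.adjMatrix ℝ *ᵥ x = lam • x) (hx : 0 ≤ x) :
    (lam + 1) * ∑ v, x v ^ 2 ≤ (∑ v, x v) ^ 2 :=
  calc (lam + 1) * ∑ v, x v ^ 2 = ∑ v, (lam + 1) * x v * x v := by
        rw [mul_sum]; simp only [sq, mul_assoc]
    _ ≤ ∑ v, (∑ w, x w) * x v := sum_le_sum fun v _ =>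
        mul_le_mul_of_nonneg_right (add_one_mul_le_sum_of_adjMatrix_mulVec_eq heig hx v) (hx v)
    _ = (∑ v, x v) ^ 2 := by rw [← mul_sum, sq]

end SimpleGraph

theorem stmt3_general {V : Type*} [Fintype V] (G : SimpleGraph V)
    (x : V → ℝ) (hx : ∀ v, 0 < x v) (lam : ℝ)
    (heig : G.adjMatrix ℝ *ᵥ x = lam • x)
    (hnorm : ∑ v, x v ^ 2 = 1) :
    cv2 x ≤ (Fintype.card V : ℝ) / (lam + 1) - 1 := by
  obtain ⟨u, -⟩ := nonempty_of_sum_ne_zero (hnorm.trans_ne one_ne_zero)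
  have hx0 : 0 ≤ x := fun v => (hx v).le
  have hS : 0 < ∑ v, x v := sum_pos (fun v _ => hx v) ⟨u, mem_univ u⟩
  have hlam := G.nonneg_of_adjMatrix_mulVec_eq heig hx0 (hx u)
  have hsq := G.add_one_mul_sum_sq_le_sq_sum_of_adjMatrix_mulVec_eq heig hx0
  rw [hnorm, mul_one] at hsq
  rw [cv2_eq_card_mul_sum_sq_div_sq_sub_one x hS.ne', hnorm, mul_one]
  gcongr

/-- For a connected graph `G` on `N` vertices with an entrywise-positive adjacency
eigenvector `x` with eigenvalue `λ` normalized so that `‖x‖₂² = 1`,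
we have `c(x) ≤ N / (λ + 1) − 1`. -/
theorem stmt3 {V : Type*} [Fintype V] (G : SimpleGraph V) (hG : G.Connected)
    (x : V → ℝ) (hx : ∀ v, 0 < x v) (lam : ℝ)
    (heig : G.adjMatrix ℝ *ᵥ x = lam • x)
    (hnorm : ∑ v, x v ^ 2 = 1) :
    cv2 x ≤ (Fintype.card V : ℝ) / (lam + 1) - 1 :=
  stmt3_general G x hx lam heig hnorm
end

section
/- For n ≥ 1 let K_{1,n,n} be the complete tripartite graph with parts of sizes 1, n, n, and for each n let x_n be an entrywise-positive eigenvector of the adjacency matrix of K_{1,n,n}. Then, as n → ∞, the principal ratio γ(K_{1,n,n}) = (max_v x_n(v))/(min_v x_n(v)) tends to 2, c(x_n) tends to 0, and c(d_n) tends to 0, where d_n is the degree vector of K_{1,n,n}. -/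
open scoped Classical
open Matrix Filter Topology

/-- The complete tripartite graph `K_{1,n,n}` with parts of sizes `1`, `n`, `n`. -/
def K1nn (n : ℕ) : SimpleGraph ((i : Fin 3) × Fin (![1, n, n] i)) :=
  SimpleGraph.completeMultipartiteGraph fun i : Fin 3 => Fin (![1, n, n] i)

/-! A positive eigenvector of a complete multipartite graph is constant on each part, because
`μ x_v` is the total weight minus the weight of the part of `v`. In `K_{1,n,n}` the two large
parts then carry the same value, so `x` is `t y` at the centre and `y` elsewhere, with
`t² + n t = 2n`; hence `1 ≤ t ≤ 2` and `2 - t = t² / n ≤ 4 / n`. A vector with one entry `a`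
and `2n` entries `y` has `c = 2n (a - y)² / (a + 2n y)²`, which is at most `1 / n` when
`0 ≤ a ≤ 2y`; this covers the eigenvector and the degree vector (`a = 2n`, `y = n + 1`). -/

namespace SimpleGraph

theorem eigenvalue_pos_of_adj {W : Type*} [Fintype W] (G : SimpleGraph W)
    [DecidableRel G.Adj] {x : W → ℝ} {μ : ℝ} (hx : ∀ v, 0 < x v)
    (heig : G.adjMatrix ℝ *ᵥ x = μ • x) {u v : W} (huv : G.Adj u v) : 0 < μ := by
  have hu := congrFun heig u
  rw [adjMatrix_mulVec_apply, Pi.smul_apply, smul_eq_mul] at hu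
  have hsum : 0 < ∑ w ∈ G.neighborFinset u, x w :=
    Finset.sum_pos (fun w _ => hx w) ⟨v, (G.mem_neighborFinset u v).2 huv⟩
  exact pos_of_mul_pos_left (hu ▸ hsum) (hx u).le

namespace completeMultipartiteGraph

variable {ι : Type*} [Fintype ι] {V : ι → Type*} [∀ i, Fintype (V i)]

theorem adjMatrix_mulVec_apply
    [DecidableRel (completeMultipartiteGraph V).Adj] (x : (Σ i, V i) → ℝ) (v : Σ i, V i) :
    ((completeMultipartiteGraph V).adjMatrix ℝ *ᵥ x) v = ∑ u, x u - ∑ j, x ⟨v.1, j⟩ := by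
  have hsplit : ∀ u, (if (completeMultipartiteGraph V).Adj v u then x u else 0) =
      x u - if v.1 = u.1 then x u else 0 := fun u => by
    by_cases h : v.1 = u.1 <;> simp [completeMultipartiteGraph, h]
  rw [SimpleGraph.adjMatrix_mulVec_apply, neighborFinset_eq_filter, Finset.sum_filter]
  simp_rw [hsplit]
  rw [Finset.sum_sub_distrib]
  congr 1
  rw [Fintype.sum_sigma, Finset.sum_eq_single v.1
    (fun i _ hi => Finset.sum_eq_zero fun j _ => if_neg (Ne.symm hi)) (by simp)]
  simp

theorem eq_of_fst_eq_of_mulVec_eq_smul [DecidableRel (completeMultipartiteGraph V).Adj]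
    {x : (Σ i, V i) → ℝ} {μ : ℝ} (hμ : μ ≠ 0)
    (heig : (completeMultipartiteGraph V).adjMatrix ℝ *ᵥ x = μ • x)
    {u v : Σ i, V i} (huv : u.1 = v.1) : x u = x v := by
  have hu := congrFun heig u
  have hv := congrFun heig v
  rw [adjMatrix_mulVec_apply, Pi.smul_apply, smul_eq_mul] at hu hv
  rw [huv] at hu
  exact mul_left_cancel₀ hμ (hu.symm.trans hv)

end completeMultipartiteGraph

end SimpleGraph

theorem ciSup_ite_of_le {ι α : Type*} [Finite ι] [ConditionallyCompleteLattice α]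
    {p : ι → Prop} [DecidablePred p] {a b : α} (hba : b ≤ a) (hp : ∃ i, p i) :
    ⨆ i, (if p i then a else b) = a := by
  obtain ⟨i, hi⟩ := hp
  have : Nonempty ι := ⟨i⟩
  refine le_antisymm (ciSup_le fun j => ?_) ?_
  · split_ifs
    exacts [le_rfl, hba]
  · simpa [hi] using le_ciSup (Set.finite_range fun j => if p j then a else b).bddAbove i

theorem ciInf_ite_of_le {ι α : Type*} [Finite ι] [ConditionallyCompleteLattice α]
    {p : ι → Prop} [DecidablePred p] {a b : α} (hba : b ≤ a) (hp : ∃ i, ¬p i) :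
    ⨅ i, (if p i then a else b) = b := by
  obtain ⟨i, hi⟩ := hp
  have : Nonempty ι := ⟨i⟩
  refine le_antisymm ?_ (le_ciInf fun j => ?_)
  · simpa [hi] using ciInf_le (Set.finite_range fun j => if p j then a else b).bddBelow i
  · split_ifs
    exacts [hba, le_rfl]

theorem quadratic_root_bounds {n t : ℝ} (hn : 1 ≤ n) (ht : 0 < t) (h : t ^ 2 + n * t = 2 * n) :
    1 ≤ t ∧ t ≤ 2 ∧ 2 - 4 / n ≤ t := by
  have ht1 : 1 ≤ t := by nlinarith
  have ht2 : t ≤ 2 := by nlinarith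
  refine ⟨ht1, ht2, ?_⟩
  have hgap : 2 - t = t ^ 2 / n := by field_simp; linarith
  have hsq : t ^ 2 / n ≤ 4 / n := by gcongr; nlinarith
  linarith

theorem cv2_nonneg {ι : Type*} [Fintype ι] (x : ι → ℝ) : 0 ≤ cv2 x := by
  unfold cv2
  positivity

namespace K1nn

abbrev Vertex (n : ℕ) := (i : Fin 3) × Fin (![1, n, n] i)

def centerVec (n : ℕ) (a y : ℝ) : Vertex n → ℝ := fun v => if v.1 = 0 then a else y

theorem sum_comp_fst (n : ℕ) (f : Fin 3 → ℝ) :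
    ∑ v : Vertex n, f v.1 = f 0 + n * f 1 + n * f 2 := by
  simp [Fintype.sum_sigma, Fin.sum_univ_three]

theorem card_vertex (n : ℕ) : (Fintype.card (Vertex n) : ℝ) = 2 * n + 1 := by
  have h := sum_comp_fst n fun _ => (1 : ℝ)
  simp only [mul_one] at h
  rw [Fintype.card_eq_sum_ones, Nat.cast_sum, Nat.cast_one, h]
  ring

theorem sum_centerVec (n : ℕ) (a y : ℝ) (g : ℝ → ℝ) :
    ∑ v, g (centerVec n a y v) = g a + 2 * n * g y := by
  simp only [centerVec]
  rw [sum_comp_fst n fun i => g (if i = 0 then a else y)]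
  simp only [Fin.isValue, if_pos, Fin.reduceEq, if_false]
  ring

theorem cv2_centerVec (n : ℕ) (a y : ℝ) :
    cv2 (centerVec n a y) = 2 * n * (a - y) ^ 2 / (a + 2 * n * y) ^ 2 := by
  have hN : (2 * n + 1 : ℝ) ≠ 0 := by positivity
  have hmean := sum_centerVec n a y id
  simp only [id] at hmean
  set m := (a + 2 * n * y) / (2 * n + 1) with hm
  rw [cv2, card_vertex, hmean, ← hm, sum_centerVec n a y fun t => (t - m) ^ 2,
    show ((a - m) ^ 2 + 2 * n * (y - m) ^ 2) / (2 * n + 1) = 2 * n * (a - y) ^ 2 / (2 * n + 1) ^ 2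
      by rw [hm]; field_simp; ring,
    hm, div_pow, div_div_div_cancel_right₀ (pow_ne_zero 2 hN)]

theorem cv2_centerVec_le {n : ℕ} {a y : ℝ} (hn : 0 < n) (hy : 0 < y) (ha : 0 ≤ a)
    (hay : a ≤ 2 * y) : cv2 (centerVec n a y) ≤ 1 / n := by
  have hn' : (0 : ℝ) < n := by exact_mod_cast hn
  rw [cv2_centerVec, div_le_div_iff₀ (by positivity) hn']
  have hdev : (a - y) ^ 2 ≤ y ^ 2 := by nlinarith
  have hmean : 2 * n * y ≤ a + 2 * n * y := by linarith
  calc 2 * n * (a - y) ^ 2 * n ≤ 2 * n * y ^ 2 * n := by gcongr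
    _ ≤ (2 * n * y) ^ 2 := by nlinarith
    _ ≤ 1 * (a + 2 * n * y) ^ 2 := by rw [one_mul]; gcongr

theorem ratio_centerVec {n : ℕ} (hn : 1 ≤ n) {a y : ℝ} (hya : y ≤ a) :
    (⨆ v, centerVec n a y v) / (⨅ v, centerVec n a y v) = a / y := by
  have hcenter : ∃ v : Vertex n, v.1 = 0 := ⟨⟨0, ⟨0, by simp⟩⟩, rfl⟩
  have hrest : ∃ v : Vertex n, ¬v.1 = 0 := ⟨⟨1, ⟨0, by simp; omega⟩⟩, Fin.zero_lt_one.ne'⟩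
  simp only [centerVec]
  rw [ciSup_ite_of_le hya hcenter, ciInf_ite_of_le hya hrest]

/- `hdec` is passed explicitly here and below: it need not agree with the instance that would be
synthesized for `completeMultipartiteGraph`. -/
theorem adjMatrix_mulVec_apply {n : ℕ} [hdec : DecidableRel (K1nn n).Adj] (x : Vertex n → ℝ)
    (v : Vertex n) : ((K1nn n).adjMatrix ℝ *ᵥ x) v = ∑ u, x u - ∑ j, x ⟨v.1, j⟩ :=
  @SimpleGraph.completeMultipartiteGraph.adjMatrix_mulVec_apply _ _ _ _ hdec x v

theorem degree_eq_centerVec (n : ℕ) (v : Vertex n) :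
    ((K1nn n).degree v : ℝ) = centerVec n (2 * n) (n + 1) v := by
  have h := SimpleGraph.adjMatrix_mulVec_const_apply (G := K1nn n) (a := (1 : ℝ)) (v := v)
  rw [mul_one] at h
  rw [← h, adjMatrix_mulVec_apply]
  simp only [Function.const_apply, Finset.sum_const, Finset.card_univ, Fintype.card_fin,
    nsmul_eq_mul, mul_one, card_vertex]
  rcases v with ⟨i, j⟩
  fin_cases i <;> simp [centerVec] <;> ring

theorem eq_centerVec_of_mulVec_eq_smul {n : ℕ} (hn : 1 ≤ n) [hdec : DecidableRel (K1nn n).Adj]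
    {x : Vertex n → ℝ} {μ : ℝ} (hx : ∀ v, 0 < x v)
    (heig : (K1nn n).adjMatrix ℝ *ᵥ x = μ • x) :
    ∃ t y : ℝ, 0 < t ∧ 0 < y ∧ t ^ 2 + n * t = 2 * n ∧ x = centerVec n (t * y) y := by
  have hn1 : 0 < ![1, n, n] 1 := by simp; omega
  have hn2 : 0 < ![1, n, n] 2 := by simp; omega
  set a := x ⟨0, ⟨0, by simp⟩⟩
  set y₁ := x ⟨1, ⟨0, hn1⟩⟩
  set y₂ := x ⟨2, ⟨0, hn2⟩⟩
  have hμ : 0 < μ :=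
    SimpleGraph.eigenvalue_pos_of_adj (K1nn n) hx heig (u := ⟨0, ⟨0, by simp⟩⟩)
      (v := ⟨1, ⟨0, hn1⟩⟩) Fin.zero_lt_one.ne
  have hconst : x = fun v => ![a, y₁, y₂] v.1 := by
    funext ⟨i, j⟩
    fin_cases i <;>
      exact @SimpleGraph.completeMultipartiteGraph.eq_of_fst_eq_of_mulVec_eq_smul
        _ _ _ _ hdec _ _ hμ.ne' heig _ _ rfl
  have heq : ∀ (i : Fin 3) (j : Fin (![1, n, n] i)), μ * ![a, y₁, y₂] i =
      a + n * y₁ + n * y₂ - (![1, n, n] i : ℝ) * ![a, y₁, y₂] i := by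
    intro i j
    have h := congrFun heig ⟨i, j⟩
    rw [adjMatrix_mulVec_apply, Pi.smul_apply, smul_eq_mul, hconst, sum_comp_fst] at h
    simpa using h.symm
  have h₀ := heq 0 ⟨0, by simp⟩
  have h₁ := heq 1 ⟨0, hn1⟩
  have h₂ := heq 2 ⟨0, hn2⟩
  simp only [Fin.isValue, cons_val_zero, cons_val_one, cons_val, Nat.cast_one, one_mul]
    at h₀ h₁ h₂
  have hy : y₂ = y₁ := by
    have h : (μ + n) * (y₁ - y₂) = 0 := by linarith
    have : μ + n ≠ 0 := by positivity
    linarith [(mul_eq_zero.mp h).resolve_left this]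
  have hy₁ : 0 < y₁ := hx _
  refine ⟨a / y₁, y₁, div_pos (hx _) hy₁, hy₁, ?_, ?_⟩
  · rw [hy] at h₀ h₁
    field_simp
    linear_combination y₁ * h₀ - a * h₁
  · rw [div_mul_cancel₀ a hy₁.ne', hconst, hy]
    funext ⟨i, j⟩
    fin_cases i <;> simp [centerVec]

end K1nn

/-- For `n ≥ 1` let `xₙ` be an entrywise-positive adjacency eigenvector of
`K_{1,n,n}` and `dₙ` its degree vector.  As `n → ∞`, the principal ratio
`γ(K_{1,n,n}) → 2`, `c(xₙ) → 0` and `c(dₙ) → 0`. -/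
theorem stmt6 (x : (n : ℕ) → ((i : Fin 3) × Fin (![1, n, n] i)) → ℝ) (lam : ℕ → ℝ)
    (hx : ∀ n, 1 ≤ n → ∀ v, 0 < x n v)
    (heig : ∀ n, 1 ≤ n → (K1nn n).adjMatrix ℝ *ᵥ x n = lam n • x n) :
    Tendsto (fun n => (⨆ v, x n v) / (⨅ v, x n v)) atTop (𝓝 2) ∧
    Tendsto (fun n => cv2 (x n)) atTop (𝓝 0) ∧
    Tendsto (fun n => cv2 (fun v => ((K1nn n).degree v : ℝ))) atTop (𝓝 0) := by
  have hbounds : ∀ᶠ n : ℕ in atTop, 2 - 4 / (n : ℝ) ≤ (⨆ v, x n v) / (⨅ v, x n v) ∧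
      (⨆ v, x n v) / (⨅ v, x n v) ≤ 2 ∧ cv2 (x n) ≤ 1 / n := by
    filter_upwards [eventually_ge_atTop 1] with n hn
    obtain ⟨t, y, ht, hy, hroot, hxn⟩ :=
      K1nn.eq_centerVec_of_mulVec_eq_smul hn (hx n hn) (heig n hn)
    obtain ⟨ht_one, ht_two, ht_lower⟩ := quadratic_root_bounds (by exact_mod_cast hn) ht hroot
    rw [hxn, K1nn.ratio_centerVec hn (by nlinarith), mul_div_cancel_right₀ t hy.ne']
    exact ⟨ht_lower, ht_two, K1nn.cv2_centerVec_le hn hy (by positivity) (by nlinarith)⟩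
  have hdeg : ∀ᶠ n : ℕ in atTop, cv2 (fun v => ((K1nn n).degree v : ℝ)) ≤ 1 / n := by
    filter_upwards [eventually_ge_atTop 1] with n hn
    rw [funext (K1nn.degree_eq_centerVec n)]
    exact K1nn.cv2_centerVec_le hn (by positivity) (by positivity) (by linarith)
  have hlower : Tendsto (fun n : ℕ => 2 - 4 / (n : ℝ)) atTop (𝓝 2) := by
    simpa using
      (tendsto_const_nhds (x := (2 : ℝ))).sub (tendsto_const_div_atTop_nhds_zero_nat (4 : ℝ))
  refine ⟨tendsto_of_tendsto_of_tendsto_of_le_of_le' hlower tendsto_const_nhds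
    (hbounds.mono fun _ h => h.1) (hbounds.mono fun _ h => h.2.1), ?_, ?_⟩
  · exact squeeze_zero' (.of_forall fun _ => cv2_nonneg _) (hbounds.mono fun _ h => h.2.2)
      tendsto_one_div_atTop_nhds_zero_nat
  · exact squeeze_zero' (.of_forall fun _ => cv2_nonneg _) hdeg tendsto_one_div_atTop_nhds_zero_nat
end

section
/- Fix an integer k ≥ 1. For each n ≥ 2 let x_n be an entrywise-positive eigenvector of the adjacency matrix of the complete split graph S(n, kn). Then the principal ratio γ(S(n,kn)) = (max_v x_n(v))/(min_v x_n(v)) tends to (√(4k+1) + 1)/2 as n → ∞. -/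
/-!
A positive eigenvector of `S(n, m)` is constant on each side, say `a` on the clique and `b` on
the independent set, and the eigenvalue equations `(n - 1) a + m b = λ a`, `n a = λ b` show that
`r = a / b = λ / n` is the positive root of `r² = (1 - 1/n) r + m/n`; moreover `b ≤ a` once
`m ≥ 1`, so `r` is the principal ratio. For `m = k n` these roots tend to the positive root of
`r² = r + k`.
-/

open scoped Classical
open Matrix Filter Topology

/-- The complete split graph `S(n,m) = K_{n+m} − K_m`: a clique of `n` vertices
(the left summand) completely joined to an independent set of `m` vertices
(the right summand). -/
def completeSplitGraph (n m : ℕ) : SimpleGraph (Fin n ⊕ Fin m) where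
  Adj u v := u ≠ v ∧ (u.isLeft ∨ v.isLeft)
  symm := by
    constructor
    rintro u v ⟨h1, h2⟩
    exact ⟨h1.symm, h2.symm⟩
  loopless := by
    constructor
    rintro u ⟨h, -⟩
    exact h rfl

lemma eq_quadratic_root {r c k : ℝ} (hr : 0 < r) (hk : 0 ≤ k) (h : r ^ 2 = c * r + k) :
    r = (c + √(c ^ 2 + 4 * k)) / 2 := by
  have hrc : c ≤ r := by nlinarith
  have hsqrt : √(c ^ 2 + 4 * k) = 2 * r - c := by
    rw [Real.sqrt_eq_iff_eq_sq (by positivity) (by linarith)]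
    linear_combination (-4) * h
  linarith

noncomputable def principalRatio {V : Type*} (x : V → ℝ) : ℝ := (⨆ v, x v) / (⨅ v, x v)

lemma principalRatio_sumElim_const {α β : Type*} [Nonempty α] [Nonempty β] (a b : ℝ) :
    principalRatio (Sum.elim (fun _ : α => a) (fun _ : β => b)) = (a ⊔ b) / (a ⊓ b) := by
  have hrange : Set.range (Sum.elim (fun _ : α => a) (fun _ : β => b)) = {a, b} := by
    rw [Set.Sum.elim_range, Set.range_const, Set.range_const, Set.singleton_union]
  rw [principalRatio, iSup, iInf, hrange, csSup_pair, csInf_pair]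

-- `h₁`, `h₂` are the eigenvalue equations of `S(n, m)` at a vector equal to `a` on the clique
-- and to `b` on the independent set.
lemma le_of_split_equations {n m a b lam : ℝ} (hn : 1 ≤ n) (hm : 1 ≤ m) (ha : 0 < a)
    (h₁ : (n - 1) * a + m * b = lam * a) (h₂ : n * a = lam * b) : b ≤ a := by
  by_contra! hab
  have hlam_lt : lam < n := by nlinarith
  have hlam_gt : n < lam := by nlinarith
  linarith

lemma div_eq_of_split_equations {n m a b lam : ℝ} (hn : 0 < n) (hm : 0 ≤ m) (ha : 0 < a)
    (hb : 0 < b) (h₁ : (n - 1) * a + m * b = lam * a) (h₂ : n * a = lam * b) :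
    a / b = (1 - 1 / n + √((1 - 1 / n) ^ 2 + 4 * (m / n))) / 2 := by
  apply eq_quadratic_root (by positivity) (by positivity)
  field_simp
  linear_combination a * h₂ - b * h₁

namespace completeSplitGraph

variable {n m : ℕ}

@[simp] lemma adj_inl {i : Fin n} {v : Fin n ⊕ Fin m} :
    (completeSplitGraph n m).Adj (.inl i) v ↔ v ≠ .inl i := by
  simp only [completeSplitGraph, Sum.isLeft_inl, true_or, and_true]
  exact ne_comm

@[simp] lemma adj_inr_inl {j : Fin m} {i : Fin n} :
    (completeSplitGraph n m).Adj (.inr j) (.inl i) := by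
  simp [completeSplitGraph]

@[simp] lemma not_adj_inr_inr {j j' : Fin m} :
    ¬ (completeSplitGraph n m).Adj (.inr j) (.inr j') := by
  simp [completeSplitGraph]

lemma adjMatrix_mulVec_inl {R : Type*} [NonAssocRing R] (x : Fin n ⊕ Fin m → R) (i : Fin n) :
    ((completeSplitGraph n m).adjMatrix R *ᵥ x) (.inl i) = ∑ v, x v - x (.inl i) := by
  simp [mulVec, dotProduct, SimpleGraph.adjMatrix_apply, ite_not, Finset.sum_ite, Finset.filter_ne']

lemma adjMatrix_mulVec_inr {R : Type*} [NonAssocRing R] (x : Fin n ⊕ Fin m → R) (j : Fin m) :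
    ((completeSplitGraph n m).adjMatrix R *ᵥ x) (.inr j) = ∑ i, x (.inl i) := by
  simp [mulVec, dotProduct, Fintype.sum_sum_type, SimpleGraph.adjMatrix_apply]

variable {x : Fin n ⊕ Fin m → ℝ} {lam : ℝ}

lemma eigenvalue_pos (hn : 0 < n) (hm : 0 < m) (hx : ∀ v, 0 < x v)
    (heig : (completeSplitGraph n m).adjMatrix ℝ *ᵥ x = lam • x) : 0 < lam := by
  have : Nonempty (Fin n) := Fin.pos_iff_nonempty.mp hn
  have hj := congrFun heig (.inr ⟨0, hm⟩)
  rw [adjMatrix_mulVec_inr, Pi.smul_apply, smul_eq_mul] at hj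
  have hsum : 0 < ∑ i, x (.inl i) := Finset.sum_pos (fun i _ => hx _) Finset.univ_nonempty
  exact (pos_iff_pos_of_mul_pos (hj ▸ hsum)).mpr (hx _)

lemma eq_sumElim_of_mulVec_eq_smul (hlam : 0 < lam)
    (heig : (completeSplitGraph n m).adjMatrix ℝ *ᵥ x = lam • x) :
    x = Sum.elim (fun _ => (∑ v, x v) / (lam + 1)) (fun _ => (∑ i, x (.inl i)) / lam) := by
  funext v
  have hv := congrFun heig v
  rcases v with i | j
  · rw [adjMatrix_mulVec_inl] at hv
    simp only [Pi.smul_apply, smul_eq_mul, Sum.elim_inl] at hv ⊢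
    field_simp
    linarith
  · rw [adjMatrix_mulVec_inr] at hv
    simp only [Pi.smul_apply, smul_eq_mul, Sum.elim_inr] at hv ⊢
    field_simp
    linarith

lemma split_equations_of_mulVec_sumElim_eq_smul {a b : ℝ}
    (heig : (completeSplitGraph n m).adjMatrix ℝ *ᵥ Sum.elim (fun _ => a) (fun _ => b) =
      lam • Sum.elim (fun _ => a) (fun _ => b)) (i : Fin n) (j : Fin m) :
    (n - 1) * a + m * b = lam * a ∧ n * a = lam * b := by
  have hi := congrFun heig (.inl i)
  have hj := congrFun heig (.inr j)
  rw [adjMatrix_mulVec_inl, Fintype.sum_sum_type] at hi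
  rw [adjMatrix_mulVec_inr] at hj
  simp only [Sum.elim_inl, Sum.elim_inr, Finset.sum_const, Finset.card_univ, Fintype.card_fin,
    nsmul_eq_mul, Pi.smul_apply, smul_eq_mul] at hi hj
  constructor <;> linarith

theorem principalRatio_eq
    (hn : 0 < n) (hm : 0 < m) (hx : ∀ v, 0 < x v)
    (heig : (completeSplitGraph n m).adjMatrix ℝ *ᵥ x = lam • x) :
    principalRatio x = (1 - 1 / n + √((1 - 1 / n) ^ 2 + 4 * (m / n))) / 2 := by
  have : Nonempty (Fin n) := Fin.pos_iff_nonempty.mp hn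
  have : Nonempty (Fin m) := Fin.pos_iff_nonempty.mp hm
  have hx_eq := eq_sumElim_of_mulVec_eq_smul (eigenvalue_pos hn hm hx heig) heig
  set a := (∑ v, x v) / (lam + 1)
  set b := (∑ i, x (.inl i)) / lam
  rw [hx_eq] at heig hx ⊢
  have ha : 0 < a := hx (.inl ⟨0, hn⟩)
  have hb : 0 < b := hx (.inr ⟨0, hm⟩)
  obtain ⟨h₁, h₂⟩ := split_equations_of_mulVec_sumElim_eq_smul heig ⟨0, hn⟩ ⟨0, hm⟩
  have hba := le_of_split_equations (by exact_mod_cast hn) (by exact_mod_cast hm) ha h₁ h₂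
  rw [principalRatio_sumElim_const, sup_eq_left.mpr hba, inf_eq_right.mpr hba]
  exact div_eq_of_split_equations (by exact_mod_cast hn) (by positivity) ha hb h₁ h₂

end completeSplitGraph

/-- Fix `k ≥ 1`.  If `xₙ` is an entrywise-positive adjacency eigenvector of the
complete split graph `S(n, kn)`, then the principal ratio
`γ(S(n,kn)) = (max xₙ)/(min xₙ)` tends to `(√(4k+1) + 1)/2` as `n → ∞`. -/
theorem stmt8 (k : ℕ) (hk : 1 ≤ k)
    (x : (n : ℕ) → (Fin n ⊕ Fin (k * n)) → ℝ) (lam : ℕ → ℝ)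
    (hx : ∀ n, 2 ≤ n → ∀ v, 0 < x n v)
    (heig : ∀ n, 2 ≤ n →
      (completeSplitGraph n (k * n)).adjMatrix ℝ *ᵥ x n = lam n • x n) :
    Tendsto (fun n => (⨆ v, x n v) / (⨅ v, x n v)) atTop
      (𝓝 ((Real.sqrt (4 * k + 1) + 1) / 2)) := by
  have hratio : ∀ᶠ n : ℕ in atTop,
      (1 - 1 / n + √((1 - 1 / n) ^ 2 + 4 * k)) / 2 = principalRatio (x n) := by
    filter_upwards [eventually_ge_atTop 2] with n hn
    rw [completeSplitGraph.principalRatio_eq (by omega) (by positivity) (hx n hn) (heig n hn)]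
    push_cast
    field_simp
  have hc : Tendsto (fun n : ℕ => 1 - 1 / (n : ℝ)) atTop (𝓝 1) := by
    simpa using (tendsto_const_nhds (x := (1 : ℝ))).sub tendsto_one_div_atTop_nhds_zero_nat
  have hlim := (hc.add ((hc.pow 2).add_const (4 * (k : ℝ))).sqrt).div_const 2
  rw [one_pow, add_comm 1 (4 * (k : ℝ)), add_comm 1] at hlim
  exact hlim.congr' hratio
end

section
/- Fix an integer r ≥ 4. For each n for which there exists a connected r-regular graph G_n^r on n vertices, let P_nG_n^r be the graph obtained by identifying one endpoint of a path on n vertices with a vertex of G_n^r, and let x_n be an entrywise-positive eigenvector of its adjacency matrix. Then the principal ratio γ(P_nG_n^r) = (max_v x_n(v))/(min_v x_n(v)) tends to ∞ as n → ∞. -/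
open scoped Classical
open Matrix Filter Topology

/-- The kite built from a head graph `G` by attaching a path with `p` extra
vertices `inl 0, inl 1, …, inl (p−1)` to the vertex `v0` of `G`; the path on
`p + 1` vertices `inl 0 — inl 1 — ⋯ — inl (p−1) — v0` has its last vertex
identified with `v0`. -/
def kite (p : ℕ) {V : Type*} (G : SimpleGraph V) (v0 : V) :
    SimpleGraph (Fin p ⊕ V) where
  Adj u v :=
    match u, v with
    | Sum.inl i, Sum.inl j => i.val + 1 = j.val ∨ j.val + 1 = i.val
    | Sum.inl i, Sum.inr w => i.val + 1 = p ∧ w = v0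
    | Sum.inr w, Sum.inl j => j.val + 1 = p ∧ w = v0
    | Sum.inr w, Sum.inr w' => G.Adj w w'
  symm := by
    constructor
    rintro (i | w) (j | w') h
    · exact h.symm
    · exact h
    · exact h
    · exact G.adj_symm h
  loopless := by
    constructor
    rintro (i | w) h
    · rcases h with h | h <;> omega
    · exact G.irrefl h

/-! The eigenvalue equation at a vertex of `G` where `x` is smallest on `G` gives `λ ≥ r ≥ 4`.
Read from its free end, the eigenvector along the pendant path satisfies `b₀ = 0`,
`b_{k+2} = λ b_{k+1} - b_k`, and for `λ ≥ c + c⁻¹` this recurrence grows at least by the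
factor `c` at every step. With `c = 2` the values at the two ends of the path, and hence the
maximum and minimum of `x`, differ by a factor at least `2 ^ (n - 2)`. -/

open Finset

theorem div_le_ciSup_div_ciInf {ι : Type*} [Finite ι] {x : ι → ℝ} (hx : ∀ i, 0 < x i)
    (i j : ι) : x i / x j ≤ (⨆ k, x k) / (⨅ k, x k) := by
  have : Nonempty ι := ⟨i⟩
  have hinf : 0 < ⨅ k, x k := by
    obtain ⟨k, hk⟩ := Finite.exists_min x
    exact (hx k).trans_le (le_ciInf hk)
  exact div_le_div₀ ((hx i).le.trans (le_ciSup (Finite.bddAbove_range x) i))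
    (le_ciSup (Finite.bddAbove_range x) i) hinf (ciInf_le (Finite.bddBelow_range x) j)

namespace SimpleGraph

variable {W : Type*} [Fintype W] {H : SimpleGraph W} [DecidableRel H.Adj]

theorem card_le_of_adjMatrix_mulVec_eq_smul {x : W → ℝ} {lam : ℝ} (hx : ∀ v, 0 < x v)
    (hev : H.adjMatrix ℝ *ᵥ x = lam • x) {u : W} {s : Finset W} (hadj : ∀ v ∈ s, H.Adj u v)
    (hmin : ∀ v ∈ s, x u ≤ x v) : (#s : ℝ) ≤ lam := by
  have hrow : lam * x u = ∑ v ∈ H.neighborFinset u, x v := by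
    simpa using (congrFun hev u).symm
  have : #s * x u ≤ lam * x u := by
    calc (#s : ℝ) * x u = ∑ _v ∈ s, x u := by simp
      _ ≤ ∑ v ∈ s, x v := sum_le_sum hmin
      _ ≤ ∑ v ∈ H.neighborFinset u, x v :=
        sum_le_sum_of_subset_of_nonneg (fun v hv => by simpa using hadj v hv)
          fun v _ _ => (hx v).le
      _ = lam * x u := hrow.symm
  exact le_of_mul_le_mul_right this (hx u)

end SimpleGraph

theorem pow_mul_le_of_three_term_recurrence {b : ℕ → ℝ} {lam c : ℝ} {m : ℕ} (hc : 0 < c)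
    (hlam : c + c⁻¹ ≤ lam) (h0 : b 0 = 0) (h1 : 0 ≤ b 1)
    (hrec : ∀ k < m, lam * b (k + 1) = b k + b (k + 2)) :
    ∀ k ≤ m, c ^ k * b 1 ≤ b (k + 1) := by
  have hlam' : c * c + 1 ≤ c * lam := by
    have := mul_le_mul_of_nonneg_left hlam hc.le
    rwa [mul_add, mul_inv_cancel₀ hc.ne'] at this
  suffices ∀ k ≤ m, c * b k ≤ b (k + 1) ∧ c ^ k * b 1 ≤ b (k + 1) from fun k hk => (this k hk).2
  intro k
  induction k with
  | zero => intro; simp [h0, h1]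
  | succ k ih =>
    intro hk
    obtain ⟨hstep, hpow⟩ := ih (by omega)
    have hrec_k := hrec k (by omega)
    have hb : 0 ≤ b (k + 1) := (mul_nonneg (pow_nonneg hc.le k) h1).trans hpow
    have hnext : c * b (k + 1) ≤ b (k + 2) := by
      refine le_of_mul_le_mul_left ?_ hc
      nlinarith [mul_le_mul_of_nonneg_right hlam' hb, hstep, hrec_k]
    refine ⟨hnext, ?_⟩
    calc c ^ (k + 1) * b 1 = c * (c ^ k * b 1) := by ring
      _ ≤ c * b (k + 1) := mul_le_mul_of_nonneg_left hpow hc.le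
      _ ≤ b (k + 2) := hnext

section Kite

variable {p : ℕ} {V : Type*}

@[simp]
theorem kite_adj_inl_inl {G : SimpleGraph V} {v0 : V} {i j : Fin p} :
    (kite p G v0).Adj (.inl i) (.inl j) ↔ (i : ℕ) + 1 = j ∨ (j : ℕ) + 1 = i := Iff.rfl

@[simp]
theorem kite_adj_inl_inr {G : SimpleGraph V} {v0 : V} {i : Fin p} {w : V} :
    (kite p G v0).Adj (.inl i) (.inr w) ↔ (i : ℕ) + 1 = p ∧ w = v0 := Iff.rfl

/-- The values of `x` along the path of a kite, shifted by one and padded with zeros, so that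
the eigenvalue equation reads `λ b (k + 1) = b k + b (k + 2)` also at the free end `k = 0`. -/
def kitePathValues (x : Fin p ⊕ V → ℝ) : ℕ → ℝ
  | 0 => 0
  | k + 1 => if h : k < p then x (.inl ⟨k, h⟩) else 0

theorem sum_ite_add_one_eq_kitePathValues (x : Fin p ⊕ V → ℝ) (m : ℕ) :
    ∑ i : Fin p, (if (i : ℕ) + 1 = m then x (.inl i) else 0) = kitePathValues x m := by
  cases m with
  | zero => simp [kitePathValues]
  | succ k =>
    simp only [Nat.add_right_cancel_iff, kitePathValues]
    split_ifs with hk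
    · have hval : ∀ i : Fin p, (i : ℕ) = k ↔ i = ⟨k, hk⟩ := fun _ =>
        (Fin.ext_iff (b := ⟨k, hk⟩)).symm
      simp only [hval, sum_ite_eq', mem_univ, if_true]
    · exact sum_eq_zero fun i _ => if_neg (by omega)

variable [Fintype V] {G : SimpleGraph V} {v0 : V}

theorem kite_adjMatrix_mulVec_inl (x : Fin p ⊕ V → ℝ) {k : ℕ} (hk : k + 1 < p) :
    ((kite p G v0).adjMatrix ℝ *ᵥ x) (.inl ⟨k, by omega⟩) =
      kitePathValues x k + kitePathValues x (k + 2) := by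
  have hsplit : ∀ i : Fin p,
      (if k + 1 = (i : ℕ) ∨ (i : ℕ) + 1 = k then x (.inl i) else 0) =
        (if (i : ℕ) + 1 = k then x (.inl i) else 0) +
          (if (i : ℕ) + 1 = k + 2 then x (.inl i) else 0) := by
    intro i
    split_ifs <;> first | omega | simp
  simp only [mulVec, dotProduct, SimpleGraph.adjMatrix_apply, Fintype.sum_sum_type,
    kite_adj_inl_inl, kite_adj_inl_inr, ite_mul, one_mul, zero_mul, show k + 1 ≠ p by omega,
    false_and, if_false, sum_const_zero, add_zero, hsplit, sum_add_distrib,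
    sum_ite_add_one_eq_kitePathValues]

theorem kitePathValues_recurrence {x : Fin p ⊕ V → ℝ} {lam : ℝ}
    (hev : (kite p G v0).adjMatrix ℝ *ᵥ x = lam • x) {k : ℕ} (hk : k + 1 < p) :
    lam * kitePathValues x (k + 1) = kitePathValues x k + kitePathValues x (k + 2) := by
  rw [← kite_adjMatrix_mulVec_inl x hk, hev]
  simp [kitePathValues, show k < p by omega]

theorem degree_le_of_kite_adjMatrix_mulVec_eq_smul [Nonempty V] {r : ℕ}
    (hG : G.IsRegularOfDegree r) {x : Fin p ⊕ V → ℝ} {lam : ℝ} (hx : ∀ v, 0 < x v)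
    (hev : (kite p G v0).adjMatrix ℝ *ᵥ x = lam • x) : (r : ℝ) ≤ lam := by
  obtain ⟨w, hw⟩ := Finite.exists_min (x ∘ .inr)
  have hcard : #((G.neighborFinset w).map (.inr : V ↪ Fin p ⊕ V)) = r := by
    rw [card_map]; exact hG w
  rw [← hcard]
  refine SimpleGraph.card_le_of_adjMatrix_mulVec_eq_smul hx hev (u := .inr w) ?_ ?_ <;>
    simp only [Finset.mem_map, SimpleGraph.mem_neighborFinset, Function.Embedding.inr_apply,
      forall_exists_index, and_imp] <;> rintro _ w' hw' rfl
  · exact hw'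
  · exact hw w'

theorem pow_le_kite_iSup_div_iInf (hp : 0 < p) {x : Fin p ⊕ V → ℝ} {lam c : ℝ}
    (hx : ∀ v, 0 < x v) (hev : (kite p G v0).adjMatrix ℝ *ᵥ x = lam • x) (hc : 0 < c)
    (hlam : c + c⁻¹ ≤ lam) : c ^ (p - 1) ≤ (⨆ v, x v) / (⨅ v, x v) := by
  have hgrowth := pow_mul_le_of_three_term_recurrence hc hlam rfl
    (by simpa [kitePathValues, hp] using (hx _).le)
    (fun k hk => kitePathValues_recurrence hev (k := k) (by omega)) (p - 1) le_rfl
  have hfirst := hx (.inl ⟨0, hp⟩)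
  simp only [kitePathValues, hp, Nat.sub_lt hp one_pos, dif_pos] at hgrowth
  calc c ^ (p - 1) ≤ x (.inl ⟨p - 1, by omega⟩) / x (.inl ⟨0, hp⟩) := by
        rwa [le_div_iff₀ hfirst]
    _ ≤ (⨆ v, x v) / (⨅ v, x v) := div_le_ciSup_div_ciInf hx _ _

end Kite

/-- Fix `r ≥ 4`.  For every `n` admitting a connected `r`-regular graph `Gₙʳ` on
`n` vertices, the kite `PₙGₙʳ` (a path on `n` vertices glued to a vertex of
`Gₙʳ`) has principal ratio `γ(PₙGₙʳ) = (max xₙ)/(min xₙ)` tending to `∞` as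
`n → ∞`, where `xₙ` is any entrywise-positive adjacency eigenvector. -/
theorem stmt14 (r : ℕ) (hr : 4 ≤ r) :
    ∀ C : ℝ, ∃ N : ℕ, ∀ n : ℕ, N ≤ n →
      ∀ (G : SimpleGraph (Fin n)), G.Connected → G.IsRegularOfDegree r →
      ∀ (v0 : Fin n) (x : Fin (n - 1) ⊕ Fin n → ℝ) (lam : ℝ),
        (∀ v, 0 < x v) →
        (kite (n - 1) G v0).adjMatrix ℝ *ᵥ x = lam • x →
        C < (⨆ v, x v) / (⨅ v, x v) := by
  intro C
  obtain ⟨k, hk⟩ := pow_unbounded_of_one_lt C one_lt_two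
  refine ⟨k + 2, fun n hn G _ hG v0 x lam hx hev => ?_⟩
  have : Nonempty (Fin n) := ⟨⟨0, by omega⟩⟩
  have hlam : (4 : ℝ) ≤ lam :=
    (Nat.ofNat_le_cast.mpr hr).trans (degree_le_of_kite_adjMatrix_mulVec_eq_smul hG hx hev)
  calc C < 2 ^ k := hk
    _ ≤ 2 ^ (n - 1 - 1) := pow_le_pow_right₀ one_le_two (by omega)
    _ ≤ (⨆ v, x v) / (⨅ v, x v) :=
      pow_le_kite_iSup_div_iInf (by omega) hx hev two_pos (by norm_num; linarith)
end

section
/- Let G be a connected simple graph that is not regular, and for each k ≥ 1 let x_k be an entrywise-positive eigenvector of the adjacency matrix of the k-fold Cartesian power G^{□k}. Then, as k → ∞, γ(G^{□k})² − 1 tends to ∞, c(x_k) tends to ∞, and c(d_k) tends to 0, where γ(G^{□k}) = (max x_k)/(min x_k) and d_k is the degree vector of G^{□k}. -/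
open scoped Classical
open Matrix Filter Topology

/-- The `k`-fold Cartesian (box) power `G^{□k}` of a graph `G`: vertices are
`k`-tuples of vertices of `G`, and two tuples are adjacent iff they differ in
exactly one coordinate, where they are adjacent in `G`. -/
def boxPow {V : Type*} (G : SimpleGraph V) (k : ℕ) : SimpleGraph (Fin k → V) where
  Adj u v := ∃ i, G.Adj (u i) (v i) ∧ ∀ j, j ≠ i → u j = v j
  symm := by
    constructor
    rintro u v ⟨i, hadj, hrest⟩
    exact ⟨i, hadj.symm, fun j hj => (hrest j hj).symm⟩
  loopless := by
    constructor
    rintro u ⟨i, hadj, -⟩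
    exact G.loopless.irrefl _ hadj

/-! The principal eigenvector of `G^{□k}` is the tensor power `v ↦ ∏ i, y (v i)` of the
principal eigenvector `y` of `G`, since positive eigenvectors of a connected graph are unique
up to scaling. Hence its max/min ratio is `γ(G)^k` and `c(x_k) + 1 = (c(y) + 1)^k`, and both
grow exponentially because `y` is not constant when `G` is not regular. The degree vector of
`G^{□k}` is instead a sum of `k` independent copies of the degree vector of `G`, so its mean and
variance are both multiplied by `k` and `c(d_k) = c(d)/k`. -/

open Finset SimpleGraph

section Statistics

variable {α β : Type*} [Fintype α] [Fintype β]

noncomputable def mean (x : α → ℝ) : ℝ := (∑ a, x a) / Fintype.card α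

noncomputable def var (x : α → ℝ) : ℝ := (∑ a, (x a - mean x) ^ 2) / Fintype.card α

theorem cv2_eq_var_div_mean_sq (x : α → ℝ) : cv2 x = var x / mean x ^ 2 := rfl

theorem mean_comp_equiv (e : α ≃ β) (x : β → ℝ) : mean (x ∘ e) = mean x := by
  rw [mean, mean, Fintype.card_congr e]
  congr 1
  exact Fintype.sum_equiv e _ _ fun _ => rfl

theorem var_comp_equiv (e : α ≃ β) (x : β → ℝ) : var (x ∘ e) = var x := by
  rw [var, var, mean_comp_equiv, Fintype.card_congr e]
  congr 1
  exact Fintype.sum_equiv e _ _ fun _ => rfl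

theorem mean_const_mul (c : ℝ) (x : α → ℝ) : mean (fun a => c * x a) = c * mean x := by
  rw [mean, mean, ← mul_sum, mul_div_assoc]

theorem var_const_mul (c : ℝ) (x : α → ℝ) : var (fun a => c * x a) = c ^ 2 * var x := by
  simp only [var, mean_const_mul, ← mul_sub, mul_pow, ← mul_sum, mul_div_assoc]

theorem cv2_const_mul {c : ℝ} (hc : c ≠ 0) (x : α → ℝ) : cv2 (fun a => c * x a) = cv2 x := by
  rw [cv2_eq_var_div_mean_sq, cv2_eq_var_div_mean_sq, var_const_mul, mean_const_mul, mul_pow,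
    mul_div_mul_left _ _ (pow_ne_zero 2 hc)]

theorem var_eq_mean_sq_sub_sq (x : α → ℝ) : var x = mean (fun a => x a ^ 2) - mean x ^ 2 := by
  rcases isEmpty_or_nonempty α with hα | hα
  · simp [var, mean]
  simp only [var, mean, sub_sq, sum_add_distrib, sum_sub_distrib, ← sum_mul, ← mul_sum, sum_const,
    card_univ, nsmul_eq_mul]
  field_simp
  ring

theorem cv2_add_one {x : α → ℝ} (hx : mean x ≠ 0) :
    cv2 x + 1 = mean (fun a => x a ^ 2) / mean x ^ 2 := by
  rw [cv2_eq_var_div_mean_sq, var_eq_mean_sq_sub_sq]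
  field_simp
  ring

theorem var_pos {x : α → ℝ} (hx : ∃ a b, x a ≠ x b) : 0 < var x := by
  obtain ⟨a, b, hab⟩ := hx
  obtain ⟨c, hc⟩ : ∃ c, x c ≠ mean x := by
    by_contra! h
    exact hab ((h a).trans (h b).symm)
  have : Nonempty α := ⟨a⟩
  refine div_pos (sum_pos' (fun _ _ => sq_nonneg _) ⟨c, mem_univ c, ?_⟩) (by positivity)
  exact pow_two_pos_of_ne_zero (sub_ne_zero.2 hc)

theorem cv2_pos {x : α → ℝ} (hx : ∃ a b, x a ≠ x b) (hμ : mean x ≠ 0) : 0 < cv2 x :=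
  div_pos (var_pos hx) (pow_two_pos_of_ne_zero hμ)

variable [Nonempty α] [Nonempty β]

theorem mean_pos {x : α → ℝ} (hx : ∀ a, 0 < x a) : 0 < mean x :=
  div_pos (sum_pos (fun a _ => hx a) univ_nonempty) (by positivity)

theorem sum_sub_mean (x : α → ℝ) : ∑ a, (x a - mean x) = 0 := by
  rw [sum_sub_distrib, sum_const, card_univ, nsmul_eq_mul, mean]
  field_simp
  ring

theorem mean_add_prod (f : α → ℝ) (g : β → ℝ) :
    mean (fun p : α × β => f p.1 + g p.2) = mean f + mean g := by
  simp only [mean, Fintype.sum_prod_type, sum_add_distrib, sum_const, card_univ, nsmul_eq_mul,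
    ← mul_sum, Fintype.card_prod, Nat.cast_mul]
  field_simp

theorem var_add_prod (f : α → ℝ) (g : β → ℝ) :
    var (fun p : α × β => f p.1 + g p.2) = var f + var g := by
  have hsplit : ∀ p : α × β, (f p.1 + g p.2 - (mean f + mean g)) ^ 2
      = (f p.1 - mean f) ^ 2 + 2 * (f p.1 - mean f) * (g p.2 - mean g) + (g p.2 - mean g) ^ 2 :=
    fun p => by ring
  rw [var, mean_add_prod, Fintype.card_prod, Nat.cast_mul]
  simp only [hsplit, Fintype.sum_prod_type, sum_add_distrib, ← mul_sum, ← sum_mul, sum_sub_mean,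
    sum_const, card_univ, nsmul_eq_mul, var]
  field_simp
  ring

end Statistics

section Coordinates

theorem sum_apply_comp_consEquiv {V : Type*} (f : V → ℝ) (k : ℕ) :
    (fun v : Fin (k + 1) → V => ∑ i, f (v i)) ∘ (Fin.consEquiv fun _ => V : V × (Fin k → V) ≃ _)
      = fun p => f p.1 + ∑ i, f (p.2 i) := by
  funext p
  simp [Fin.sum_univ_succ]

variable {V : Type*} [Fintype V] [Nonempty V]

theorem mean_sum_apply (f : V → ℝ) (k : ℕ) :
    mean (fun v : Fin k → V => ∑ i, f (v i)) = k * mean f := by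
  induction k with
  | zero => simp [mean]
  | succ k ih =>
    rw [← mean_comp_equiv (Fin.consEquiv fun _ => V : V × (Fin k → V) ≃ _),
      sum_apply_comp_consEquiv, mean_add_prod f fun w : Fin k → V => ∑ i, f (w i), ih]
    push_cast
    ring

theorem var_sum_apply (f : V → ℝ) (k : ℕ) :
    var (fun v : Fin k → V => ∑ i, f (v i)) = k * var f := by
  induction k with
  | zero => simp [var, mean]
  | succ k ih =>
    rw [← var_comp_equiv (Fin.consEquiv fun _ => V : V × (Fin k → V) ≃ _),
      sum_apply_comp_consEquiv, var_add_prod f fun w : Fin k → V => ∑ i, f (w i), ih]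
    push_cast
    ring

theorem cv2_sum_apply (f : V → ℝ) (k : ℕ) :
    cv2 (fun v : Fin k → V => ∑ i, f (v i)) = cv2 f / k := by
  rw [cv2_eq_var_div_mean_sq, cv2_eq_var_div_mean_sq, var_sum_apply, mean_sum_apply]
  rcases eq_or_ne (k : ℝ) 0 with hk | hk
  · simp [hk]
  · rw [mul_pow, sq (k : ℝ), mul_assoc, mul_div_mul_left _ _ hk, div_div, mul_comm (mean f ^ 2)]

end Coordinates

section Products

variable {ι V : Type*} [Fintype ι] [DecidableEq ι] [Fintype V]

theorem mean_prod_apply (y : V → ℝ) :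
    mean (fun v : ι → V => ∏ i, y (v i)) = mean y ^ Fintype.card ι := by
  rw [mean, mean, ← Fintype.prod_sum fun _ => y, prod_const, card_univ, Fintype.card_fun,
    Nat.cast_pow, div_pow]

theorem cv2_prod_apply_add_one {y : V → ℝ} (hy : mean y ≠ 0) :
    cv2 (fun v : ι → V => ∏ i, y (v i)) + 1 = (cv2 y + 1) ^ Fintype.card ι := by
  have hZ : mean (fun v : ι → V => ∏ i, y (v i)) ≠ 0 := by
    rw [mean_prod_apply]; exact pow_ne_zero _ hy
  rw [cv2_add_one hZ, cv2_add_one hy]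
  simp only [← prod_pow]
  rw [mean_prod_apply, mean_prod_apply (fun a => y a ^ 2), ← pow_mul, mul_comm, pow_mul, div_pow]

end Products

section Perron

variable {W : Type*} [Fintype W] {H : SimpleGraph W}

theorem eigenvalue_eq_of_pos [Nonempty W] {x z : W → ℝ} {μ ν : ℝ}
    (hx : ∀ v, 0 < x v) (hz : ∀ v, 0 < z v)
    (hxe : H.adjMatrix ℝ *ᵥ x = μ • x) (hze : H.adjMatrix ℝ *ᵥ z = ν • z) : μ = ν := by
  have hxz : 0 < x ⬝ᵥ z := sum_pos (fun v _ => mul_pos (hx v) (hz v)) univ_nonempty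
  have hsymm : x ⬝ᵥ H.adjMatrix ℝ *ᵥ z = (H.adjMatrix ℝ *ᵥ x) ⬝ᵥ z := by
    rw [dotProduct_mulVec, ← vecMul_transpose, H.transpose_adjMatrix]
  rw [hxe, hze, dotProduct_smul, smul_dotProduct, smul_eq_mul, smul_eq_mul] at hsymm
  exact (mul_right_cancel₀ hxz.ne' hsymm).symm

theorem eq_zero_of_nonneg_of_adjMatrix_mulVec_eq_smul (hconn : H.Preconnected) {w : W → ℝ}
    {μ : ℝ} (hw : 0 ≤ w) (he : H.adjMatrix ℝ *ᵥ w = μ • w) {v₀ : W} (h₀ : w v₀ = 0) :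
    w = 0 := by
  have hspread : ∀ {a b}, H.Adj a b → w a = 0 → w b = 0 := fun {a b} hab ha => by
    have hsum : ∑ u ∈ H.neighborFinset a, w u = 0 := by
      rw [← adjMatrix_mulVec_apply, he, Pi.smul_apply, ha, smul_zero]
    exact (sum_eq_zero_iff_of_nonneg fun u _ => hw u).1 hsum b (H.mem_neighborFinset a b |>.2 hab)
  funext v
  induction (H.reachable_iff_reflTransGen v₀ v).1 (hconn v₀ v) with
  | refl => exact h₀
  | tail _ hbc ih => exact hspread hbc ih

theorem exists_pos_eq_smul_of_pos_eigenvector [Nonempty W] (hconn : H.Preconnected)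
    {x z : W → ℝ} {μ ν : ℝ} (hx : ∀ v, 0 < x v) (hz : ∀ v, 0 < z v)
    (hxe : H.adjMatrix ℝ *ᵥ x = μ • x) (hze : H.adjMatrix ℝ *ᵥ z = ν • z) :
    ∃ c : ℝ, 0 < c ∧ x = c • z := by
  obtain rfl := eigenvalue_eq_of_pos hx hz hxe hze
  obtain ⟨v₀, -, hv₀⟩ := exists_min_image univ (fun v => x v / z v) univ_nonempty
  set c := x v₀ / z v₀
  refine ⟨c, div_pos (hx v₀) (hz v₀), sub_eq_zero.1 ?_⟩
  -- `x - c • z` is a nonnegative eigenvector vanishing at the minimiser of `x / z`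
  refine eq_zero_of_nonneg_of_adjMatrix_mulVec_eq_smul hconn (w := x - c • z) (μ := μ) (v₀ := v₀)
    ?_ ?_ ?_
  · exact fun v => by simpa using (le_div_iff₀ (hz v)).1 (hv₀ v (mem_univ v))
  · rw [mulVec_sub, mulVec_smul, hxe, hze, smul_sub, smul_comm]
  · simp [c, div_mul_cancel₀ _ (hz v₀).ne']

theorem exists_isRegularOfDegree_of_adjMatrix_mulVec_const [Nonempty W] {c μ : ℝ} (hc : c ≠ 0)
    (he : H.adjMatrix ℝ *ᵥ Function.const W c = μ • Function.const W c) :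
    ∃ r, H.IsRegularOfDegree r := by
  have hdeg : ∀ v, (H.degree v : ℝ) = μ := fun v => by
    have := congrFun he v
    rw [adjMatrix_mulVec_const_apply, Pi.smul_apply, Function.const_apply, smul_eq_mul] at this
    exact mul_right_cancel₀ hc this
  exact ⟨H.degree (Classical.arbitrary W), fun v => by exact_mod_cast (hdeg v).trans (hdeg _).symm⟩

end Perron

section BoxPow

variable {V : Type*} {G : SimpleGraph V} {k : ℕ}

theorem boxPow_adj_update (u : Fin k → V) (i : Fin k) {a b : V} (hab : G.Adj a b) :
    (boxPow G k).Adj (Function.update u i a) (Function.update u i b) :=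
  ⟨i, by simpa using hab, fun j hj => by simp [hj]⟩

theorem boxPow_preconnected (hG : G.Preconnected) : (boxPow G k).Preconnected := by
  intro u v
  have hstep : ∀ (u : Fin k → V) (i : Fin k) (b : V),
      (boxPow G k).Reachable u (Function.update u i b) := fun u i b => by
    simpa using (hG (u i) b).map ⟨_, boxPow_adj_update u i⟩
  have hpiece : ∀ s : Finset (Fin k), (boxPow G k).Reachable u (s.piecewise v u) := by
    intro s
    induction s using Finset.induction with
    | empty => simp
    | insert i s _ ih => rw [piecewise_insert]; exact ih.trans (hstep _ i (v i))
  simpa using hpiece univ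

variable [Fintype V]

theorem boxPow_sum_neighborFinset {M : Type*} [AddCommMonoid M] (v : Fin k → V)
    (f : (Fin k → V) → M) :
    ∑ u ∈ (boxPow G k).neighborFinset v, f u
      = ∑ i, ∑ w ∈ G.neighborFinset (v i), f (Function.update v i w) := by
  rw [sum_sigma']
  symm
  refine sum_bij (fun p _ => Function.update v p.1 p.2) ?_ ?_ ?_ fun _ _ => rfl
  · rintro ⟨i, w⟩ hp
    have hadj := boxPow_adj_update v i (by simpa using hp : G.Adj (v i) w)
    rw [Function.update_eq_self] at hadj
    simpa using hadj
  · rintro ⟨i, w⟩ hp ⟨i', w'⟩ hp' heq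
    simp only [mem_sigma, mem_univ, true_and, mem_neighborFinset] at hp hp'
    obtain rfl : i = i' := by
      by_contra hii
      have := congrFun heq i
      rw [Function.update_self, Function.update_of_ne hii] at this
      exact hp.ne' this
    obtain rfl : w = w' := by simpa using congrFun heq i
    rfl
  · intro u hu
    obtain ⟨i, hadj, hrest⟩ := (mem_neighborFinset _ _ _).1 hu
    refine ⟨⟨i, u i⟩, by simpa using hadj, ?_⟩
    funext j
    by_cases hj : j = i
    · subst hj; simp
    · simp [hj, hrest j hj]

theorem boxPow_degree (v : Fin k → V) : (boxPow G k).degree v = ∑ i, G.degree (v i) := by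
  simp only [← card_neighborFinset_eq_degree, card_eq_sum_ones, boxPow_sum_neighborFinset]

theorem adjMatrix_mulVec_of_boxPow_one {z : (Fin 1 → V) → ℝ} {μ : ℝ}
    (hz : (boxPow G 1).adjMatrix ℝ *ᵥ z = μ • z) :
    G.adjMatrix ℝ *ᵥ (fun a => z fun _ => a) = μ • fun a => z fun _ => a := by
  funext a
  have := congrFun hz fun _ => a
  simp only [adjMatrix_mulVec_apply, boxPow_sum_neighborFinset, Fin.sum_univ_one,
    Function.update_eq_const_of_subsingleton] at this
  simpa only [adjMatrix_mulVec_apply, Function.const_def, Pi.smul_apply] using this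

theorem boxPow_adjMatrix_mulVec_prod {y : V → ℝ} {μ : ℝ} (hy : G.adjMatrix ℝ *ᵥ y = μ • y) :
    (boxPow G k).adjMatrix ℝ *ᵥ (fun v => ∏ i, y (v i)) = (k * μ) • fun v => ∏ i, y (v i) := by
  funext v
  have hcoord : ∀ i, ∑ w ∈ G.neighborFinset (v i), ∏ j, y (Function.update v i w j)
      = μ * ∏ j, y (v j) := fun i => by
    have hyi := congrFun hy (v i)
    rw [adjMatrix_mulVec_apply, Pi.smul_apply, smul_eq_mul] at hyi
    simp only [Function.apply_update (fun _ => y), prod_update_of_mem (mem_univ i), ← sum_mul,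
      hyi, mul_assoc, ← prod_eq_mul_prod_sdiff_singleton_of_mem (mem_univ i) fun j => y (v j)]
  simp [adjMatrix_mulVec_apply, boxPow_sum_neighborFinset, hcoord, mul_assoc]

end BoxPow

section PrincipalRatio

variable {ι V : Type*} [Fintype ι] [Finite V] [Nonempty V]

theorem iSup_prod_apply {y : V → ℝ} (hy : 0 ≤ y) :
    ⨆ v : ι → V, ∏ i, y (v i) = (⨆ a, y a) ^ Fintype.card ι := by
  obtain ⟨a, ha⟩ := exists_eq_ciSup_of_finite (f := y)
  refine le_antisymm (ciSup_le fun v => ?_) ?_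
  · rw [← card_univ, ← prod_const]
    exact prod_le_prod (fun i _ => hy _) fun i _ => le_ciSup (Set.finite_range y).bddAbove _
  · exact le_ciSup_of_le (Set.finite_range _).bddAbove (fun _ => a) (by simp [ha])

theorem iInf_prod_apply {y : V → ℝ} (hy : 0 ≤ y) :
    ⨅ v : ι → V, ∏ i, y (v i) = (⨅ a, y a) ^ Fintype.card ι := by
  obtain ⟨a, ha⟩ := exists_eq_ciInf_of_finite (f := y)
  refine le_antisymm ?_ (le_ciInf fun v => ?_)
  · exact ciInf_le_of_le (Set.finite_range _).bddBelow (fun _ => a) (by simp [ha])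
  · rw [← card_univ, ← prod_const]
    exact prod_le_prod (fun i _ => ha ▸ hy a) fun i _ => ciInf_le (Set.finite_range y).bddBelow _

theorem iSup_div_iInf_prod_apply {y : V → ℝ} (hy : 0 ≤ y) :
    (⨆ v : ι → V, ∏ i, y (v i)) / (⨅ v : ι → V, ∏ i, y (v i))
      = ((⨆ a, y a) / ⨅ a, y a) ^ Fintype.card ι := by
  rw [iSup_prod_apply hy, iInf_prod_apply hy, div_pow]

theorem one_lt_iSup_div_iInf {y : V → ℝ} (hy : ∀ a, 0 < y a) (hne : ∃ a b, y a ≠ y b) :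
    1 < (⨆ a, y a) / ⨅ a, y a := by
  obtain ⟨a, b, hab⟩ := hne
  obtain ⟨c, hc⟩ := exists_eq_ciInf_of_finite (f := y)
  refine (one_lt_div (hc ▸ hy c)).2 (lt_of_not_ge fun hle => hab ?_)
  have hconst : ∀ d, y d = ⨅ a, y a := fun d =>
    le_antisymm ((le_ciSup (Set.finite_range y).bddAbove d).trans hle)
      (ciInf_le (Set.finite_range y).bddBelow d)
  rw [hconst a, hconst b]

end PrincipalRatio

theorem iSup_div_iInf_const_mul {α : Type*} {c : ℝ} (hc : 0 < c) (f : α → ℝ) :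
    (⨆ a, c * f a) / (⨅ a, c * f a) = (⨆ a, f a) / ⨅ a, f a := by
  rw [← Real.mul_iSup_of_nonneg hc.le, ← Real.mul_iInf_of_nonneg hc.le,
    mul_div_mul_left _ _ hc.ne']

theorem tendsto_pow_sub_one_atTop {r : ℝ} (hr : 1 < r) :
    Tendsto (fun k : ℕ => r ^ k - 1) atTop atTop := by
  simpa only [sub_eq_add_neg] using
    tendsto_atTop_add_const_right _ (-1) (tendsto_pow_atTop_atTop_of_one_lt hr)

/-- Let `G` be a connected non-regular graph, and for each `k ≥ 1` let `x_k` be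
an entrywise-positive adjacency eigenvector of `G^{□k}` and `d_k` the degree
vector of `G^{□k}`.  Then, as `k → ∞`, `γ(G^{□k})² − 1 → ∞`, `c(x_k) → ∞`, and
`c(d_k) → 0`. -/
theorem stmt19 {V : Type*} [Fintype V] (G : SimpleGraph V) (hG : G.Connected)
    (hnotreg : ¬ ∃ r, G.IsRegularOfDegree r)
    (x : (k : ℕ) → (Fin k → V) → ℝ) (lam : ℕ → ℝ)
    (hx : ∀ k, 1 ≤ k → ∀ v, 0 < x k v)
    (heig : ∀ k, 1 ≤ k → (boxPow G k).adjMatrix ℝ *ᵥ x k = lam k • x k) :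
    Tendsto (fun k => ((⨆ v, x k v) / (⨅ v, x k v)) ^ 2 - 1) atTop atTop ∧
    Tendsto (fun k => cv2 (x k)) atTop atTop ∧
    Tendsto (fun k => cv2 (fun v : Fin k → V => ((boxPow G k).degree v : ℝ)))
      atTop (𝓝 0) := by
  have : Nonempty V := hG.nonempty
  set y : V → ℝ := fun a => x 1 fun _ => a
  have hy : ∀ a, 0 < y a := fun a => hx 1 le_rfl _
  have hye : G.adjMatrix ℝ *ᵥ y = lam 1 • y := adjMatrix_mulVec_of_boxPow_one (heig 1 le_rfl)
  have hy_ne : ∃ a b, y a ≠ y b := by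
    by_contra! hconst
    obtain ⟨a⟩ := ‹Nonempty V›
    refine hnotreg (exists_isRegularOfDegree_of_adjMatrix_mulVec_const (hy a).ne' (μ := lam 1) ?_)
    simpa only [show Function.const V (y a) = y from funext (hconst a)] using hye
  have hxk : ∀ᶠ k in atTop, ∃ c : ℝ, 0 < c ∧ x k = fun v => c * ∏ i, y (v i) := by
    filter_upwards [eventually_ge_atTop 1] with k hk
    exact exists_pos_eq_smul_of_pos_eigenvector (boxPow_preconnected hG.preconnected) (hx k hk)
      (fun v => prod_pos fun i _ => hy _) (heig k hk) (boxPow_adjMatrix_mulVec_prod hye)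
  have hmean : mean y ≠ 0 := (mean_pos hy).ne'
  refine ⟨?_, ?_, ?_⟩
  · have hγ : 1 < ((⨆ a, y a) / ⨅ a, y a) ^ 2 :=
      one_lt_pow₀ (one_lt_iSup_div_iInf hy hy_ne) two_ne_zero
    refine (tendsto_pow_sub_one_atTop hγ).congr' (hxk.mono fun k ⟨c, hc, hk⟩ => ?_)
    dsimp only
    rw [hk, iSup_div_iInf_const_mul hc, iSup_div_iInf_prod_apply fun a => (hy a).le,
      Fintype.card_fin, ← pow_mul, mul_comm, pow_mul]
  · refine (tendsto_pow_sub_one_atTop (lt_add_of_pos_left 1 (cv2_pos hy_ne hmean))).congr'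
      (hxk.mono fun k ⟨c, hc, hk⟩ => ?_)
    dsimp only
    rw [hk, cv2_const_mul hc.ne', sub_eq_iff_eq_add, cv2_prod_apply_add_one hmean, Fintype.card_fin]
  · simp_rw [boxPow_degree, Nat.cast_sum, cv2_sum_apply fun a => (G.degree a : ℝ)]
    exact tendsto_const_div_atTop_nhds_zero_nat _
end
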